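/- arXiv:2402.13394 — 2 statements merged into one kernel-verified Lean document; each statement's English description precedes it below -/
import Mathlib

section
/- Let (M, λ) be a free metabolic form of rank 2k with lagrangian L ≤ M. Then M has a basis e_1,…,e_k, f_1,…,f_k such that L is generated by e_1,…,e_k, and in this basis λ is given by the block matrix [[0, I_k],[I_k, D]], where I_k is the k×k identity matrix and D is a diagonal matrix each of whose diagonal entries is 0 or 1. -/
/-!
Take a basis `e` of `L`. Since `λ` is unimodular and `L` is a direct summand, the coordinate
functionals of `e`, extended by zero on a complement `C`, are represented by vectors `f'ᵢ` with
`λ(f'ᵢ, eⱼ) = δᵢⱼ`. Replacing `f'ᵢ` by `f'ᵢ - ∑ⱼ cᵢⱼ eⱼ` changes the Gram matrix `A` of the `f'`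
into `A - c - cᵀ`, which for a suitable integer matrix `c` is diagonal with entries `Aᵢᵢ mod 2`.
The family `(e, f)` is independent because `λ(·, eⱼ)` reads off the `f`-coordinates, and it spans
because `L^⊥ = L`: the map `C → L^*`, `c ↦ λ(c, ·)|_L`, is onto between free modules of equal
rank, hence injective.
-/

open Module
open scoped Matrix

theorem Module.Basis.span_range_coe {R M : Type*} [CommRing R] [AddCommGroup M] [Module R M]
    {L : Submodule R M} {ι : Type*} (e : Basis ι R L) :
    Submodule.span R (Set.range fun i => (e i : M)) = L := by
  have := congrArg (Submodule.map L.subtype) e.span_eq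
  rwa [Submodule.map_span, ← Set.range_comp, Submodule.map_subtype_top] at this

theorem Matrix.exists_sub_sub_transpose_eq_diagonal {ι : Type*} [LinearOrder ι]
    (A : Matrix ι ι ℤ) (hA : A.IsSymm) :
    ∃ (c : Matrix ι ι ℤ) (d : ι → ℤ), (∀ i, d i = 0 ∨ d i = 1) ∧ A - c - cᵀ = diagonal d := by
  refine ⟨of fun i j => if i < j then A i j else if i = j then A i i / 2 else 0,
    fun i => A i i % 2, fun i => Int.emod_two_eq_zero_or_one _, ?_⟩
  ext i j
  have hji := hA.apply i j
  rcases lt_trichotomy i j with h | rfl | h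
  · simp [h, h.ne, h.ne', h.not_gt]
  · simp only [sub_apply, of_apply, lt_self_iff_false, ↓reduceIte, transpose_apply,
      diagonal_apply_eq]
    omega
  · simp [h, h.ne', h.not_gt, hji]

namespace LinearMap.BilinForm

section CommRing

variable {R M : Type*} [CommRing R] [AddCommGroup M] [Module R M] (B : LinearMap.BilinForm R M)

theorem exists_dual_family_of_isCompl (hB : Function.Surjective B) {L C : Submodule R M}
    (hLC : IsCompl L C) {ι : Type*} [DecidableEq ι] (e : Basis ι R L) :
    ∃ f : ι → M, ∀ i j, B (f i) (e j) = if i = j then 1 else 0 := by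
  choose g hg using hB
  refine ⟨fun i => g (e.coord i ∘ₗ L.projectionOnto C hLC), fun i j => ?_⟩
  simp [hg, Finsupp.single_apply, eq_comm]

theorem flip_orthogonal_le_of_isCompl [Nontrivial R] (hB : Function.Surjective B)
    {L C : Submodule R M} (hLC : IsCompl L C) (hL : L ≤ B.orthogonal L)
    [Module.Free R L] [Module.Finite R L] [Module.Free R C] [Module.Finite R C]
    (hrank : finrank R C = finrank R L) : B.flip.orthogonal L ≤ L := by
  let F : C →ₗ[R] Dual R L := L.subtype.dualMap ∘ₗ B ∘ₗ C.subtype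
  have hF_surj : Function.Surjective F := by
    intro φ
    obtain ⟨x, hx⟩ := hB (φ ∘ₗ L.projectionOnto C hLC)
    refine ⟨C.projectionOnto L hLC.symm x, LinearMap.ext fun l => ?_⟩
    have hxl : B (L.projection C hLC x) l = 0 := hL l.2 _ (L.projection_apply_mem hLC x)
    have := congrArg (B · l) (L.projection_add_projection_eq_self hLC x)
    simp_all [F]
  -- `C` and `Dual R L` are free of the same rank, so a surjection between them is injective.
  have hF_inj : Function.Injective F :=
    OrzechProperty.injective_of_surjective_of_injective
      ((LinearEquiv.ofFinrankEq C L hrank).trans (Free.chooseBasis R L).toDualEquiv).toLinearMap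
      F (LinearEquiv.injective _) hF_surj
  intro y hy
  obtain ⟨l, hl, c, hc, rfl⟩ := Submodule.mem_sup.1 (hLC.sup_eq_top.ge (Submodule.mem_top (x := y)))
  have hFc : F ⟨c, hc⟩ = 0 := by
    ext l'
    have hyl := hy l' l'.2
    have hll := hL l'.2 l hl
    simp_all [F]
  have hc0 : c = 0 := congrArg Subtype.val (hF_inj (hFc.trans (map_zero F).symm))
  simpa [hc0] using hl

variable {ι : Type*} [Fintype ι] [DecidableEq ι] {L : Submodule R M} (e : Basis ι R L)
  {f : ι → M}

theorem linearIndependent_sumElim_of_dual_family (hL : L ≤ B.orthogonal L)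
    (hf : ∀ i j, B (f i) (e j) = if i = j then 1 else 0) :
    LinearIndependent R (Sum.elim (fun i => (e i : M)) f) := by
  rw [Fintype.linearIndependent_iff]
  intro a ha
  rw [Fintype.sum_sum_type] at ha
  have hinr : ∀ j, a (.inr j) = 0 := by
    intro j
    have hee : ∀ i, B (e i) (e j) = 0 := fun i => hL (e j).2 _ (e i).2
    simpa [hee, hf] using congrArg (B · (e j)) ha
  have hinl := Fintype.linearIndependent_iff.1 (e.linearIndependent.map' L.subtype L.ker_subtype)
    (fun i => a (.inl i)) (by simpa [hinr] using ha)
  rintro (i | i)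
  exacts [hinl i, hinr i]

theorem top_le_span_sumElim_of_dual_family (hL : B.flip.orthogonal L ≤ L)
    (hf : ∀ i j, B (f i) (e j) = if i = j then 1 else 0) :
    ⊤ ≤ Submodule.span R (Set.range (Sum.elim (fun i => (e i : M)) f)) := by
  intro x _
  have hy : x - ∑ i, B x (e i) • f i ∈ L := by
    refine hL fun n hn => ?_
    have : B (x - ∑ i, B x (e i) • f i) ∘ₗ L.subtype = 0 := e.ext fun j => by simp [hf]
    exact LinearMap.congr_fun this ⟨n, hn⟩
  rw [← sub_add_cancel x (∑ i, B x (e i) • f i)]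
  refine add_mem ?_ (sum_mem fun i _ => Submodule.smul_mem _ _ ?_)
  · exact Submodule.span_mono (Set.range_comp_subset_range Sum.inl _) (e.span_range_coe.ge hy)
  · exact Submodule.subset_span ⟨.inr i, rfl⟩

end CommRing

theorem exists_normalized_dual_family {M : Type*} [AddCommGroup M]
    (B : LinearMap.BilinForm ℤ M) (hB : B.IsSymm) {ι : Type*} [Fintype ι] [LinearOrder ι]
    {e f' : ι → M} (he : ∀ i j, B (e i) (e j) = 0)
    (hf' : ∀ i j, B (f' i) (e j) = if i = j then 1 else 0) :
    ∃ (f : ι → M) (d : ι → ℤ), (∀ i, d i = 0 ∨ d i = 1) ∧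
      (∀ i j, B (f i) (e j) = if i = j then 1 else 0) ∧
      ∀ i j, B (f i) (f j) = if i = j then d i else 0 := by
  obtain ⟨c, d, hd, hcd⟩ := Matrix.exists_sub_sub_transpose_eq_diagonal
    (Matrix.of fun i j => B (f' i) (f' j)) (Matrix.IsSymm.ext fun i j => hB.eq _ _)
  set f := fun i => f' i - ∑ j, c i j • e j
  have hfe : ∀ i j, B (f i) (e j) = if i = j then 1 else 0 := by
    intro i j; simp [f, he, hf']
  have hff : ∀ i j, B (f i) (f j) = B (f' i) (f' j) - c i j - c j i := by
    intro i j
    have hef' : ∀ l, B (e l) (f' j) = if j = l then 1 else 0 := fun l => (hB.eq _ _).trans (hf' j l)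
    have hff' : B (f i) (f' j) = B (f' i) (f' j) - c i j := by simp [f, hef']
    change B (f i) (f' j - ∑ m, c j m • e m) = _
    simp [hff', hfe]
  refine ⟨f, d, hd, hfe, fun i j => ?_⟩
  rw [hff]
  simpa [Matrix.diagonal_apply] using congrFun₂ hcd i j

end LinearMap.BilinForm

/-- Let `(M, λ)` be a free metabolic form of rank `2k` with lagrangian `L ≤ M`.
Then `M` has a basis `e_1,…,e_k, f_1,…,f_k` such that `L` is generated by the `e_i`,
and in this basis `λ` is given by the block matrix `[[0, I_k],[I_k, D]]` where `D` is
diagonal with each diagonal entry `0` or `1`. -/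
theorem metabolic_basis
    (M : Type) [AddCommGroup M] [Module.Finite ℤ M] [Module.Free ℤ M]
    (B : LinearMap.BilinForm ℤ M)
    (hsymm : ∀ x y, B x y = B y x)
    (hns : Function.Bijective B)
    (k : ℕ) (hrk : Module.finrank ℤ M = 2 * k)
    (L : Submodule ℤ M)
    (hLsummand : ∃ C : Submodule ℤ M, IsCompl L C)
    (hLrank : Module.finrank ℤ L = k)
    (hLlagr : ∀ x ∈ L, ∀ y ∈ L, B x y = 0) :
    ∃ (b : Basis ((Fin k) ⊕ (Fin k)) ℤ M) (d : Fin k → ℤ),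
      (∀ i, d i = 0 ∨ d i = 1) ∧
      L = Submodule.span ℤ (Set.range fun i => b (Sum.inl i)) ∧
      (∀ i j, B (b (Sum.inl i)) (b (Sum.inl j)) = 0) ∧
      (∀ i j, B (b (Sum.inl i)) (b (Sum.inr j)) = if i = j then 1 else 0) ∧
      (∀ i j, B (b (Sum.inr i)) (b (Sum.inl j)) = if i = j then 1 else 0) ∧
      (∀ i j, B (b (Sum.inr i)) (b (Sum.inr j)) = if i = j then d i else 0) := by
  classical
  obtain ⟨C, hLC⟩ := hLsummand
  have hCrank : finrank ℤ C = finrank ℤ L := by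
    have := (Submodule.prodEquivOfIsCompl L C hLC).finrank_eq
    rw [finrank_prod] at this
    omega
  have hiso : L ≤ B.orthogonal L := fun y hy x hx => hLlagr x hx y hy
  let e : Basis (Fin k) ℤ L := finBasisOfFinrankEq ℤ L hLrank
  obtain ⟨f', hf'⟩ := B.exists_dual_family_of_isCompl hns.2 hLC e
  obtain ⟨f, d, hd, hfe, hff⟩ :=
    B.exists_normalized_dual_family ⟨hsymm⟩ (fun i j => hiso (e j).2 _ (e i).2) hf'
  have hcoiso := B.flip_orthogonal_le_of_isCompl hns.2 hLC hiso hCrank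
  let b := Basis.mk (B.linearIndependent_sumElim_of_dual_family e hiso hfe)
    (B.top_le_span_sumElim_of_dual_family e hcoiso hfe)
  have hb : ⇑b = Sum.elim (fun i => (e i : M)) f := Basis.coe_mk _ _
  refine ⟨b, d, hd, ?_, ?_, ?_, ?_, ?_⟩ <;> simp only [hb, Sum.elim_inl, Sum.elim_inr]
  · exact e.span_range_coe.symm
  · exact fun i j => hiso (e j).2 _ (e i).2
  · exact fun i j => by rw [hsymm, hfe]; exact if_congr eq_comm rfl rfl
  · exact hfe
  · exact hff
end

section
/- Let F, G, A be finitely generated abelian groups with F and G free, and let f : F → A and g : G → A be surjective homomorphisms. Then (a) there exist free abelian groups F', G' and an isomorphism h : F ⊕ F' → G ⊕ G' such that (f + 0) = (g + 0) ∘ h as homomorphisms F ⊕ F' → A. (b) If moreover A is free and rk F = rk G, then there is an isomorphism h : F → G with f = g ∘ h. -/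
/-!
(a) Lift `f` through `g` and `g` through `f` by projectivity, `g ∘ φ = f` and `f ∘ ψ = g`. The
shear `(x, y) ↦ (φ (x + ψ y) - y, x + ψ y)` is then an isomorphism `F × G ≃ G × F` along which
`f ∘ fst` becomes `g ∘ fst`.

(b) When `A` is free, both maps split: `F ≃ ker f × A` and `G ≃ ker g × A` over `A`. The kernels
are free of rank `rk F - rk A = rk G - rk A`, hence isomorphic, and the two splittings glue.
-/

open LinearMap Module

section Ring

variable {R F G A : Type*} [Ring R] [AddCommGroup F] [AddCommGroup G] [AddCommGroup A]
  [Module R F] [Module R G] [Module R A]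

def prodCommShear (φ : F →ₗ[R] G) (ψ : G →ₗ[R] F) : (F × G) ≃ₗ[R] (G × F) where
  toFun p := (φ (p.1 + ψ p.2) - p.2, p.1 + ψ p.2)
  invFun q := (q.2 - ψ (φ q.2 - q.1), φ q.2 - q.1)
  map_add' p q := by ext <;> simp only [Prod.fst_add, Prod.snd_add, map_add] <;> abel
  map_smul' c p := by ext <;> simp [smul_sub]
  left_inv p := by ext <;> simp
  right_inv q := by ext <;> simp

theorem fst_prodCommShear {f : F →ₗ[R] A} {g : G →ₗ[R] A} {φ : F →ₗ[R] G} {ψ : G →ₗ[R] F}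
    (hφ : g ∘ₗ φ = f) (hψ : f ∘ₗ ψ = g) (p : F × G) :
    g (prodCommShear φ ψ p).1 = f p.1 := by
  have hφ' : ∀ x, g (φ x) = f x := LinearMap.congr_fun hφ
  have hψ' : ∀ y, f (ψ y) = g y := LinearMap.congr_fun hψ
  simp [prodCommShear, hφ', hψ']

theorem exists_prodEquiv_comp_fst_eq [Projective R F] [Projective R G]
    {f : F →ₗ[R] A} {g : G →ₗ[R] A} (hf : Function.Surjective f) (hg : Function.Surjective g) :
    ∃ e : (F × G) ≃ₗ[R] (G × F), ∀ p, g (e p).1 = f p.1 := by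
  obtain ⟨φ, hφ⟩ := projective_lifting_property g f hg
  obtain ⟨ψ, hψ⟩ := projective_lifting_property f g hf
  exact ⟨prodCommShear φ ψ, fst_prodCommShear hφ hψ⟩

theorem exists_equiv_ker_prod [Projective R A] {f : F →ₗ[R] A} (hf : Function.Surjective f) :
    ∃ e : F ≃ₗ[R] ker f × A, ∀ x, (e x).2 = f x := by
  obtain ⟨s, hs⟩ := projective_lifting_property f LinearMap.id hf
  obtain ⟨e, -, he⟩ :=
    (exact_subtype_ker_map f).splitSurjectiveEquiv (ker f).injective_subtype ⟨s, hs⟩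
  exact ⟨e, fun x => (LinearMap.congr_fun he x).symm⟩

theorem exists_equiv_comp_eq_of_ker_equiv [Projective R A] {f : F →ₗ[R] A} {g : G →ₗ[R] A}
    (hf : Function.Surjective f) (hg : Function.Surjective g) (κ : ker f ≃ₗ[R] ker g) :
    ∃ h : F ≃ₗ[R] G, ∀ x, g (h x) = f x := by
  obtain ⟨eF, heF⟩ := exists_equiv_ker_prod hf
  obtain ⟨eG, heG⟩ := exists_equiv_ker_prod hg
  refine ⟨eF.trans ((κ.prodCongr (LinearEquiv.refl R A)).trans eG.symm), fun x => ?_⟩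
  rw [← heG, ← heF]
  simp

end Ring

section PID

variable {R F G A : Type*} [CommRing R] [IsDomain R] [IsPrincipalIdealRing R]
  [AddCommGroup F] [AddCommGroup G] [AddCommGroup A] [Module R F] [Module R G] [Module R A]
  [Module.Finite R F] [Module.Free R F] [Module.Finite R G] [Module.Free R G] [Module.Free R A]

theorem finrank_eq_finrank_ker_add {f : F →ₗ[R] A} (hf : Function.Surjective f) :
    finrank R F = finrank R (ker f) + finrank R A := by
  have := Module.Finite.of_surjective f hf
  obtain ⟨e, -⟩ := exists_equiv_ker_prod hf
  rw [e.finrank_eq, finrank_prod]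

theorem exists_equiv_comp_eq_of_finrank_eq {f : F →ₗ[R] A} {g : G →ₗ[R] A}
    (hf : Function.Surjective f) (hg : Function.Surjective g) (hrk : finrank R F = finrank R G) :
    ∃ h : F ≃ₗ[R] G, ∀ x, g (h x) = f x := by
  have hker : finrank R (ker f) = finrank R (ker g) := by
    have := finrank_eq_finrank_ker_add hf
    have := finrank_eq_finrank_ker_add hg
    omega
  exact exists_equiv_comp_eq_of_ker_equiv hf hg (LinearEquiv.ofFinrankEq _ _ hker)

end PID

theorem surjective_hom_stable_iso_general
    (F G A : Type) [AddCommGroup F] [AddCommGroup G] [AddCommGroup A]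
    [Module.Finite ℤ F] [Module.Finite ℤ G]
    [Module.Free ℤ F] [Module.Free ℤ G]
    (f : F →+ A) (g : G →+ A)
    (hf : Function.Surjective f) (hg : Function.Surjective g) :
    (∃ (n m : ℕ) (h : (F × (Fin n → ℤ)) ≃+ (G × (Fin m → ℤ))),
        ∀ p, f p.1 = g (h p).1) ∧
    (Module.Free ℤ A → Module.finrank ℤ F = Module.finrank ℤ G →
        ∃ h : F ≃+ G, ∀ x, f x = g (h x)) := by
  refine ⟨?_, fun _ hrk => ?_⟩
  · obtain ⟨e, he⟩ :=
      exists_prodEquiv_comp_fst_eq (f := f.toIntLinearMap) (g := g.toIntLinearMap) hf hg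
    let eF := (finBasis ℤ F).equivFun
    let eG := (finBasis ℤ G).equivFun
    exact ⟨finrank ℤ G, finrank ℤ F,
      ((LinearEquiv.refl ℤ F).prodCongr eG.symm ≪≫ₗ e ≪≫ₗ
        (LinearEquiv.refl ℤ G).prodCongr eF).toAddEquiv, fun p => (he (p.1, eG.symm p.2)).symm⟩
  · obtain ⟨h, hh⟩ :=
      exists_equiv_comp_eq_of_finrank_eq (f := f.toIntLinearMap) (g := g.toIntLinearMap) hf hg hrk
    exact ⟨h.toAddEquiv, fun x => (hh x).symm⟩

/-- Let `F, G, A` be finitely generated abelian groups with `F` and `G` free, and let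
`f : F → A`, `g : G → A` be surjective homomorphisms. Then
(a) there exist free abelian groups `F' = ℤ^n`, `G' = ℤ^m` and an isomorphism
`h : F ⊕ F' → G ⊕ G'` with `(f + 0) = (g + 0) ∘ h`;
(b) if moreover `A` is free and `rk F = rk G`, then there is an isomorphism `h : F → G`
with `f = g ∘ h`. -/
theorem surjective_hom_stable_iso
    (F G A : Type) [AddCommGroup F] [AddCommGroup G] [AddCommGroup A]
    [Module.Finite ℤ F] [Module.Finite ℤ G] [Module.Finite ℤ A]
    [Module.Free ℤ F] [Module.Free ℤ G]
    (f : F →+ A) (g : G →+ A)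
    (hf : Function.Surjective f) (hg : Function.Surjective g) :
    (∃ (n m : ℕ) (h : (F × (Fin n → ℤ)) ≃+ (G × (Fin m → ℤ))),
        ∀ p, f p.1 = g (h p).1) ∧
    (Module.Free ℤ A → Module.finrank ℤ F = Module.finrank ℤ G →
        ∃ h : F ≃+ G, ∀ x, f x = g (h x)) :=
  surjective_hom_stable_iso_general F G A f g hf hg
end
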